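/- Let μ₁,...,μₙ : K' → M be simplicial maps with μᵢ ∼ μ_{i+1} for all i, each admitting a common left strong homotopy inverse β : M → K' (i.e., β ∘ μᵢ ∼ id_{K'} for all i). Then for any simplicial maps φ₁,...,φₙ : K → K', SD(μ₁∘φ₁,...,μₙ∘φₙ) = SD(φ₁,...,φₙ). -/

import Mathlib

/-- An abstract simplicial complex on vertex type `V`. -/
structure ASC (V : Type) where
  faces : Set (Finset V)
  nonempty_of_mem : ∀ {s : Finset V}, s ∈ faces → s.Nonempty
  down_closed : ∀ {s t : Finset V}, s ∈ faces → t ⊆ s → t.Nonempty → t ∈ faces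

/-- A simplicial map between abstract simplicial complexes. -/
structure SMap {V W : Type} [DecidableEq W] (K : ASC V) (L : ASC W) where
  toFun : V → W
  maps_faces : ∀ {s : Finset V}, s ∈ K.faces → s.image toFun ∈ L.faces

namespace SMap

variable {V W U : Type} [DecidableEq V] [DecidableEq W] [DecidableEq U]
  {K : ASC V} {L : ASC W} {M : ASC U}

/-- The identity simplicial map. -/
def id (K : ASC V) : SMap K K :=
  ⟨fun v => v, by intro s hs; simpa using hs⟩

/-- Composition of simplicial maps. -/
def comp (ψ : SMap L M) (φ : SMap K L) : SMap K M :=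
  ⟨ψ.toFun ∘ φ.toFun, by
    intro s hs
    have h := ψ.maps_faces (φ.maps_faces hs)
    simpa [Finset.image_image] using h⟩

end SMap

/-- Two simplicial maps are contiguous if the images of each simplex under the two
maps together span a simplex. -/
def Contiguous {V W : Type} [DecidableEq W] {K : ASC V} {L : ASC W}
    (φ ψ : SMap K L) : Prop :=
  ∀ {s : Finset V}, s ∈ K.faces → (s.image φ.toFun ∪ s.image ψ.toFun) ∈ L.faces

/-- Being in the same contiguity class: the reflexive-transitive closure of
contiguity (`φ ∼ ψ`). -/
def CClass {V W : Type} [DecidableEq W] {K : ASC V} {L : ASC W}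
    (φ ψ : SMap K L) : Prop :=
  Relation.ReflTransGen Contiguous φ ψ

/-- The type of subcomplexes of `K`. -/
def ASC.Sub {V : Type} (K : ASC V) : Type :=
  {Ω : ASC V // Ω.faces ⊆ K.faces}

/-- Restriction of a simplicial map to a subcomplex of the domain. -/
def SMap.restrict {V W : Type} [DecidableEq W] {K : ASC V} {L : ASC W}
    (φ : SMap K L) (Ω : K.Sub) : SMap Ω.1 L :=
  ⟨φ.toFun, by intro s hs; exact φ.maps_faces (Ω.2 hs)⟩

/-- `SDle φ k` : the family `φ` has contiguity distance at most `k`, witnessed by a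
cover of `K` by `k+1` subcomplexes on each of which all the maps restrict into a
single contiguity class. -/
def SDle {V W : Type} [DecidableEq W] {K : ASC V} {L : ASC W} {n : ℕ}
    (φ : Fin n → SMap K L) (k : ℕ) : Prop :=
  ∃ Ω : Fin (k + 1) → K.Sub,
    (∀ s ∈ K.faces, ∃ j, s ∈ (Ω j).1.faces) ∧
    ∀ j i i', CClass ((φ i).restrict (Ω j)) ((φ i').restrict (Ω j))

/-- The `n`-th contiguity distance `SD(φ₁,…,φₙ)`, valued in `ℕ∞`. -/
noncomputable def SD {V W : Type} [DecidableEq W] {K : ASC V} {L : ASC W} {n : ℕ}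
    (φ : Fin n → SMap K L) : ℕ∞ :=
  sInf {m : ℕ∞ | ∃ k : ℕ, m = (k : ℕ∞) ∧ SDle φ k}

/-- `v` is a vertex of `K`. -/
def ASC.isVertex {V : Type} (K : ASC V) (v : V) : Prop :=
  ({v} : Finset V) ∈ K.faces

/-- The constant simplicial map at a vertex `v` of `L`. -/
def constMap {V W : Type} [DecidableEq W] (K : ASC V) (L : ASC W) {v : W}
    (hv : L.isVertex v) : SMap K L :=
  ⟨fun _ => v, by
    intro s hs
    rw [Finset.image_const (K.nonempty_of_mem hs) v]
    exact hv⟩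

/-- The inclusion of a subcomplex. -/
def incl {V : Type} [DecidableEq V] {K : ASC V} (Ω : K.Sub) : SMap Ω.1 K :=
  ⟨fun x => x, by intro s hs; simpa using Ω.2 hs⟩

/-- A subcomplex is categorical if its inclusion is in the same contiguity class
as a constant map. -/
def Categorical {V : Type} [DecidableEq V] {K : ASC V} (Ω : K.Sub) : Prop :=
  ∃ v : V, ∃ hv : K.isVertex v, CClass (incl Ω) (constMap Ω.1 K hv)

/-- `scatle K k` : `K` is covered by `k+1` categorical subcomplexes. -/
def scatle {V : Type} [DecidableEq V] (K : ASC V) (k : ℕ) : Prop :=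
  ∃ Ω : Fin (k + 1) → K.Sub,
    (∀ s ∈ K.faces, ∃ j, s ∈ (Ω j).1.faces) ∧ ∀ j, Categorical (Ω j)

/-- The simplicial Lusternik–Schnirelmann category, valued in `ℕ∞`. -/
noncomputable def scat {V : Type} [DecidableEq V] (K : ASC V) : ℕ∞ :=
  sInf {m : ℕ∞ | ∃ k : ℕ, m = (k : ℕ∞) ∧ scatle K k}

/-- The `n`-fold categorical product `Kⁿ`. -/
def ASC.prodPow {V : Type} [DecidableEq V] (K : ASC V) (n : ℕ) : ASC (Fin n → V) where
  faces := {s | s.Nonempty ∧ ∀ i : Fin n, s.image (fun f => f i) ∈ K.faces}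
  nonempty_of_mem := fun h => h.1
  down_closed := by
    intro s t hs hts ht
    refine ⟨ht, fun i => ?_⟩
    exact K.down_closed (hs.2 i) (Finset.image_subset_image (f := fun f => f i) hts)
      (ht.image _)

/-- Projection to the `i`-th factor of the categorical product. -/
def proj {V : Type} [DecidableEq V] (K : ASC V) (n : ℕ) (i : Fin n) :
    SMap (K.prodPow n) K :=
  ⟨fun f => f i, by intro s hs; exact hs.2 i⟩

/-- The diagonal simplicial map `K → Kⁿ`. -/
def diag {V : Type} [DecidableEq V] (K : ASC V) (n : ℕ) : SMap K (K.prodPow n) :=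
  ⟨fun v _ => v, by
    intro s hs
    refine ⟨(K.nonempty_of_mem hs).image _, fun i => ?_⟩
    have h : (s.image fun v (_ : Fin n) => v).image (fun f => f i) = s := by
      rw [Finset.image_image]
      exact Finset.image_id'
    rw [h]; exact hs⟩

/-- A subcomplex `Ω ⊆ Kⁿ` is `n`-Farber if the diagonal admits a section over `Ω`
up to contiguity class. -/
def IsFarber {V : Type} [DecidableEq V] {K : ASC V} {n : ℕ}
    (Ω : (K.prodPow n).Sub) : Prop :=
  ∃ σ : SMap Ω.1 K, CClass ((diag K n).comp σ) (incl Ω)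

/-- `dTCle K n k` : `Kⁿ` is covered by `k+1` `n`-Farber subcomplexes. -/
def dTCle {V : Type} [DecidableEq V] (K : ASC V) (n k : ℕ) : Prop :=
  ∃ Ω : Fin (k + 1) → (K.prodPow n).Sub,
    (∀ s ∈ (K.prodPow n).faces, ∃ j, s ∈ (Ω j).1.faces) ∧ ∀ j, IsFarber (Ω j)

/-- The `n`-th discrete topological complexity, valued in `ℕ∞`. -/
noncomputable def dTC {V : Type} [DecidableEq V] (K : ASC V) (n : ℕ) : ℕ∞ :=
  sInf {m : ℕ∞ | ∃ k : ℕ, m = (k : ℕ∞) ∧ dTCle K n k}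

/-- `K` is edge-path connected: any two vertices are joined by a finite edge path. -/
def ASC.EPConn {V : Type} [DecidableEq V] (K : ASC V) : Prop :=
  ∀ u v : V, K.isVertex u → K.isVertex v →
    Relation.ReflTransGen (fun a b => ({a, b} : Finset V) ∈ K.faces) u v

/-- `K` is strongly collapsible: the identity is in the same contiguity class as a
constant map. -/
def StronglyCollapsible {V : Type} [DecidableEq V] (K : ASC V) : Prop :=
  ∃ v : V, ∃ hv : K.isVertex v, CClass (SMap.id K) (constMap K K hv)

/-- `μ` is a right strong equivalence: it has a right strong homotopy inverse. -/
def RightStrongEq {V W : Type} [DecidableEq V] [DecidableEq W]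
    {K : ASC V} {L : ASC W} (μ : SMap K L) : Prop :=
  ∃ α : SMap L K, CClass (μ.comp α) (SMap.id L)

/-- `μ` is a left strong equivalence: it has a left strong homotopy inverse. -/
def LeftStrongEq {V W : Type} [DecidableEq V] [DecidableEq W]
    {K : ASC V} {L : ASC W} (μ : SMap K L) : Prop :=
  ∃ β : SMap L K, CClass (β.comp μ) (SMap.id K)

/-- The barycentric subdivision of `K`: vertices are the simplices of `K`, and
simplices are chains of simplices of `K`. -/
def ASC.sd {V : Type} (K : ASC V) : ASC (Finset V) where
  faces := {S | S.Nonempty ∧ (∀ σ ∈ S, σ ∈ K.faces) ∧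
    ∀ σ ∈ S, ∀ τ ∈ S, σ ⊆ τ ∨ τ ⊆ σ}
  nonempty_of_mem := fun h => h.1
  down_closed := fun hS hTS hT =>
    ⟨hT, fun σ hσ => hS.2.1 σ (hTS hσ), fun σ hσ τ hτ => hS.2.2 σ (hTS hσ) τ (hTS hτ)⟩

/-- The induced simplicial map on barycentric subdivisions. -/
def SMap.sd {V W : Type} [DecidableEq V] [DecidableEq W] {K : ASC V} {L : ASC W}
    (φ : SMap K L) : SMap K.sd L.sd :=
  ⟨fun σ => σ.image φ.toFun, by
    intro S hS
    refine ⟨hS.1.image _, ?_, ?_⟩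
    · intro τ hτ
      simp only [Finset.mem_image] at hτ
      obtain ⟨σ, hσ, rfl⟩ := hτ
      exact φ.maps_faces (hS.2.1 σ hσ)
    · intro τ₁ h₁ τ₂ h₂
      simp only [Finset.mem_image] at h₁ h₂
      obtain ⟨σ₁, hσ₁, rfl⟩ := h₁
      obtain ⟨σ₂, hσ₂, rfl⟩ := h₂
      rcases hS.2.2 σ₁ hσ₁ σ₂ hσ₂ with h | h
      · exact Or.inl (Finset.image_subset_image h)
      · exact Or.inr (Finset.image_subset_image h)⟩

/-! A cover of `K` witnesses `SDle` for `(φᵢ)` iff it witnesses it for `(μᵢ ∘ φᵢ)`: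
postcomposition with maps of a single contiguity class preserves "all restrictions lie in
one class", and postcomposing with `β` recovers the `φᵢ` up to contiguity, since
`β ∘ μᵢ ∼ id`. -/

theorem Equivalence.rel_of_rel_succ {α : Type*} {r : α → α → Prop} (hr : Equivalence r)
    {n : ℕ} (f : Fin n → α)
    (hf : ∀ (i : ℕ) (h : i + 1 < n), r (f ⟨i, Nat.lt_of_succ_lt h⟩) (f ⟨i + 1, h⟩))
    (i j : Fin n) : r (f i) (f j) := by
  cases n with
  | zero => exact i.elim0
  | succ m =>
    have from_zero : ∀ k : Fin (m + 1), r (f 0) (f k) :=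
      Fin.induction (hr.refl _) fun k hk => hr.trans hk (hf k (by omega))
    exact hr.trans (hr.symm (from_zero i)) (from_zero j)

section Contiguity

variable {U V W : Type} [DecidableEq U] [DecidableEq W] {K : ASC V} {L : ASC W} {M : ASC U}

theorem Contiguous.symm {φ ψ : SMap K L} (h : Contiguous φ ψ) : Contiguous ψ φ :=
  fun hs => Finset.union_comm (α := W) _ _ ▸ h hs

theorem CClass.symm {φ ψ : SMap K L} (h : CClass φ ψ) : CClass ψ φ :=
  Relation.ReflTransGen.mono (fun _ _ => Contiguous.symm) _ _ (Relation.ReflTransGen.swap _ _ h)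

theorem CClass.trans {φ ψ χ : SMap K L} (h : CClass φ ψ) (h' : CClass ψ χ) : CClass φ χ :=
  Relation.ReflTransGen.trans h h'

theorem CClass.equivalence : Equivalence (CClass (K := K) (L := L)) :=
  ⟨fun _ => .refl, CClass.symm, CClass.trans⟩

theorem Contiguous.comp_left (ψ : SMap L M) {φ φ' : SMap K L} (h : Contiguous φ φ') :
    Contiguous (ψ.comp φ) (ψ.comp φ') := fun hs => by
  simpa [SMap.comp, Finset.image_union, Finset.image_image] using ψ.maps_faces (h hs)

theorem Contiguous.comp_right {ψ ψ' : SMap L M} (h : Contiguous ψ ψ') (φ : SMap K L) :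
    Contiguous (ψ.comp φ) (ψ'.comp φ) := fun hs => by
  simpa [SMap.comp, Finset.image_image] using h (φ.maps_faces hs)

theorem CClass.comp_left (ψ : SMap L M) {φ φ' : SMap K L} (h : CClass φ φ') :
    CClass (ψ.comp φ) (ψ.comp φ') :=
  Relation.ReflTransGen.lift (p := Contiguous) (ψ.comp ·)
    (fun _ _ => Contiguous.comp_left ψ) _ _ h

theorem CClass.comp_right {ψ ψ' : SMap L M} (h : CClass ψ ψ') (φ : SMap K L) :
    CClass (ψ.comp φ) (ψ'.comp φ) :=
  Relation.ReflTransGen.lift (p := Contiguous) (fun ψ : SMap L M => ψ.comp φ)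
    (fun _ _ hc => hc.comp_right φ) _ _ h

theorem CClass.comp {ψ ψ' : SMap L M} {φ φ' : SMap K L} (hψ : CClass ψ ψ')
    (hφ : CClass φ φ') : CClass (ψ.comp φ) (ψ'.comp φ') :=
  (hφ.comp_left ψ).trans (hψ.comp_right φ')

theorem CClass.of_comp_left {β : SMap M L} {μ μ' : SMap L M} {φ φ' : SMap K L}
    (hμ : CClass (β.comp μ) (SMap.id L)) (hμ' : CClass (β.comp μ') (SMap.id L))
    (h : CClass (μ.comp φ) (μ'.comp φ')) : CClass φ φ' :=
  (hμ.comp_right φ).symm.trans ((h.comp_left β).trans (hμ'.comp_right φ'))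

theorem SD_congr {n : ℕ} {φ : Fin n → SMap K L} {ψ : Fin n → SMap K M}
    (h : ∀ k, SDle φ k ↔ SDle ψ k) : SD φ = SD ψ := by
  simp only [SD, h]

end Contiguity

/-- postcomposing with maps `μᵢ` in one contiguity class admitting a
common left strong homotopy inverse preserves `SD`. -/
theorem SD_postcomp_left_strong_eq {U V W : Type} [DecidableEq U] [DecidableEq W]
    {K : ASC V} {L : ASC W} {M : ASC U} {n : ℕ}
    (μ : Fin n → SMap L M)
    (hμ : ∀ (i : ℕ) (h : i + 1 < n),
      CClass (μ ⟨i, Nat.lt_of_succ_lt h⟩) (μ ⟨i + 1, h⟩))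
    (β : SMap M L) (hβ : ∀ i, CClass (β.comp (μ i)) (SMap.id L))
    (φ : Fin n → SMap K L) :
    SD (fun i => (μ i).comp (φ i)) = SD φ := by
  have hμ_class := CClass.equivalence.rel_of_rel_succ μ hμ
  refine SD_congr fun k => ⟨?_, ?_⟩
  · rintro ⟨Ω, hcover, hclass⟩
    exact ⟨Ω, hcover, fun j i i' => (hβ i).of_comp_left (hβ i') (hclass j i i')⟩
  · rintro ⟨Ω, hcover, hclass⟩
    exact ⟨Ω, hcover, fun j i i' => (hμ_class i i').comp (hclass j i i')⟩
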